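/- arXiv:2107.05069 — 2 statements merged into one kernel-verified Lean document; each statement's English description precedes it below -/
import Mathlib

section
/- A logic ⊢ has a τ-algebraic semantics if and only if for all sets of formulas Γ ∪ {φ}, whenever every pair (ε(φ), δ(φ)) with ε ≈ δ ∈ τ lies in the congruence θ(Γ, τ) of the formula algebra generated by { (ε(γ), δ(γ)) : ε ≈ δ ∈ τ, γ ∈ Γ }, it follows that Γ ⊢ φ. -/
/-- An algebraic signature: a type of operation symbols with arities. -/
structure Sig : Type 1 where
  Op : Type
  ar : Op → ℕ

/-- Formulas (terms) over a signature, with variables indexed by ℕ. -/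
inductive Fm (L : Sig) : Type where
  | var : ℕ → Fm L
  | op : (f : L.Op) → (Fin (L.ar f) → Fm L) → Fm L

/-- An algebra for the signature `L`. -/
structure Alg (L : Sig) : Type 1 where
  carrier : Type
  interp : (f : L.Op) → (Fin (L.ar f) → carrier) → carrier

/-- Evaluation of a formula in an algebra under a valuation of the variables. -/
def Fm.eval {L : Sig} (A : Alg L) (v : ℕ → A.carrier) : Fm L → A.carrier
  | .var n => v n
  | .op f as => A.interp f (fun i => (as i).eval A v)

/-- Substitution (endomorphism of the formula algebra). -/
def Fm.subst {L : Sig} (σ : ℕ → Fm L) : Fm L → Fm L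
  | .var n => σ n
  | .op f as => .op f (fun i => (as i).subst σ)

/-- The set of variables occurring in a formula. -/
def Fm.vars {L : Sig} : Fm L → Set ℕ
  | .var n => {n}
  | .op _ as => ⋃ i, (as i).vars

/-- Substitute the formula `ψ` for the variable `v` in `φ`. -/
def Fm.subst1 {L : Sig} (v : ℕ) (ψ : Fm L) (φ : Fm L) : Fm L :=
  φ.subst (fun n => if n = v then ψ else .var n)

/-- A logic: a substitution-invariant (finitary or not) consequence relation on formulas. -/
structure Logic (L : Sig) : Type where
  deriv : Set (Fm L) → Fm L → Prop
  axm : ∀ Γ φ, φ ∈ Γ → deriv Γ φ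
  mono : ∀ Γ Δ φ, Γ ⊆ Δ → deriv Γ φ → deriv Δ φ
  cut : ∀ Γ Δ φ, deriv Γ φ → (∀ γ ∈ Γ, deriv Δ γ) → deriv Δ φ
  substInv : ∀ (σ : ℕ → Fm L) Γ φ, deriv Γ φ → deriv (Fm.subst σ '' Γ) (φ.subst σ)

/-- A logical matrix: an algebra with a set of designated elements. -/
structure LMatrix (L : Sig) : Type 1 where
  alg : Alg L
  F : Set alg.carrier

/-- The consequence relation induced by a class of matrices. -/
def inducedBy {L : Sig} (M : Set (LMatrix L)) (Γ : Set (Fm L)) (φ : Fm L) : Prop :=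
  ∀ m ∈ M, ∀ v : ℕ → m.alg.carrier,
    (∀ γ ∈ Γ, γ.eval m.alg v ∈ m.F) → φ.eval m.alg v ∈ m.F

/-- `M` is a matrix semantics for the logic `ℒ`. -/
def IsMatrixSemantics {L : Sig} (ℒ : Logic L) (M : Set (LMatrix L)) : Prop :=
  ∀ Γ φ, ℒ.deriv Γ φ ↔ inducedBy M Γ φ

/-- Equational consequence relative to a class of algebras (equations as pairs of formulas). -/
def eqConseq {L : Sig} (K : Set (Alg L)) (Θ : Set (Fm L × Fm L)) (e : Fm L × Fm L) : Prop :=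
  ∀ A ∈ K, ∀ v : ℕ → A.carrier,
    (∀ p ∈ Θ, p.1.eval A v = p.2.eval A v) → e.1.eval A v = e.2.eval A v

/-- `τ(φ)`: the result of substituting `φ` for the variable `x` (= variable 0) in each
equation of `τ`. -/
def tauApp {L : Sig} (τ : Set (Fm L × Fm L)) (φ : Fm L) : Set (Fm L × Fm L) :=
  (fun e => (Fm.subst1 0 φ e.1, Fm.subst1 0 φ e.2)) '' τ

/-- `τ[Γ]`. -/
def tauAppSet {L : Sig} (τ : Set (Fm L × Fm L)) (Γ : Set (Fm L)) : Set (Fm L × Fm L) :=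
  ⋃ γ ∈ Γ, tauApp τ γ

/-- `τ` is a set of equations in the single variable `x` (= variable 0). -/
def IsUnivalent {L : Sig} (τ : Set (Fm L × Fm L)) : Prop :=
  ∀ e ∈ τ, e.1.vars ⊆ ({0} : Set ℕ) ∧ e.2.vars ⊆ ({0} : Set ℕ)

/-- `K` is a `τ`-algebraic semantics for `ℒ`: `Γ ⊢ φ` iff `τ[Γ] ⊨_K τ(φ)`. -/
def IsTauAlgSem {L : Sig} (ℒ : Logic L) (τ : Set (Fm L × Fm L)) (K : Set (Alg L)) : Prop :=
  IsUnivalent τ ∧ ∀ Γ φ, ℒ.deriv Γ φ ↔ ∀ e ∈ tauApp τ φ, eqConseq K (tauAppSet τ Γ) e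

/-- `ℒ` has an algebraic semantics (admits an equational completeness theorem). -/
def HasAlgSem {L : Sig} (ℒ : Logic L) : Prop :=
  ∃ (τ : Set (Fm L × Fm L)) (K : Set (Alg L)), IsTauAlgSem ℒ τ K

/-- `θ` is a congruence of the algebra `A`. -/
def IsCong {L : Sig} (A : Alg L) (θ : A.carrier → A.carrier → Prop) : Prop :=
  Equivalence θ ∧ ∀ (f : L.Op) (as bs : Fin (L.ar f) → A.carrier),
    (∀ i, θ (as i) (bs i)) → θ (A.interp f as) (A.interp f bs)

/-- The congruence of `A` generated by `X` (least congruence containing `X`). -/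
def congGen {L : Sig} (A : Alg L) (X : Set (A.carrier × A.carrier))
    (a c : A.carrier) : Prop :=
  ∀ θ, IsCong A θ → (∀ p ∈ X, θ p.1 p.2) → θ a c

/-- `p` is a unary polynomial function of `A`: `p(a) = φ^A(a, c⃗)` for a formula `φ(x, y⃗)`
and parameters `c⃗` from `A`. -/
def IsUnaryPoly {L : Sig} (A : Alg L) (p : A.carrier → A.carrier) : Prop :=
  ∃ (φ : Fm L) (c : ℕ → A.carrier),
    ∀ a, p a = φ.eval A (fun n => if n = 0 then a else c n)

/-- Compatibility of a relation with a set. -/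
def Compatible {L : Sig} (A : Alg L) (θ : A.carrier → A.carrier → Prop)
    (F : Set A.carrier) : Prop :=
  ∀ a c, θ a c → a ∈ F → c ∈ F

/-- The Leibniz congruence `Ω^A F`: the largest congruence of `A` compatible with `F`
(realized as the union of all congruences compatible with `F`). -/
def leibniz {L : Sig} (A : Alg L) (F : Set A.carrier) (a c : A.carrier) : Prop :=
  ∃ θ, IsCong A θ ∧ Compatible A θ F ∧ θ a c

/-- The formula algebra. -/
def FmAlg (L : Sig) : Alg L :=
  ⟨Fm L, fun f as => Fm.op f as⟩

/-- `ℒ` has no theorems. -/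
def LacksTheorems {L : Sig} (ℒ : Logic L) : Prop :=
  ¬ ∃ φ, ℒ.deriv ∅ φ

/-- `ℒ` is assertional. -/
def Assertional {L : Sig} (ℒ : Logic L) : Prop :=
  ∃ (M : Set (LMatrix L)) (φ : Fm L), IsMatrixSemantics ℒ M ∧ φ.vars ⊆ ({0} : Set ℕ) ∧
    ∀ m ∈ M, ∃ c : m.alg.carrier,
      (∀ a : m.alg.carrier, φ.eval m.alg (fun _ => a) = c) ∧ m.F = {c}

/-- `ℒ` is almost assertional. -/
def AlmostAssertional {L : Sig} (ℒ : Logic L) : Prop :=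
  LacksTheorems ℒ ∧
  ∃ (M : Set (LMatrix L)) (φ : Fm L), IsMatrixSemantics ℒ M ∧ φ.vars ⊆ ({0} : Set ℕ) ∧
    ∀ m ∈ M, m.F.Nonempty → ∃ c : m.alg.carrier,
      (∀ a : m.alg.carrier, φ.eval m.alg (fun _ => a) = c) ∧ m.F = {c}

/-- Two formulas are logically equivalent in `ℒ`. -/
def LogEquiv {L : Sig} (ℒ : Logic L) (ε δ : Fm L) : Prop :=
  ∀ (φ : Fm L) (v : ℕ),
    ℒ.deriv {Fm.subst1 v ε φ} (Fm.subst1 v δ φ) ∧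
    ℒ.deriv {Fm.subst1 v δ φ} (Fm.subst1 v ε φ)

/-!
Evaluating formulas in an algebra under a valuation has a congruence as kernel, so any
`τ`-algebraic semantics validates every equation of `θ(Γ, τ)`. Conversely, given the congruence
condition, take for `K` the quotients `Fm / θ(T, τ)` of the formula algebra by theories `T`. A
valuation into such a quotient is a substitution `σ` followed by the projection, and `τ[Γ]` holds
under it exactly when `τ(γσ) ⊆ θ(T, τ)` for `γ ∈ Γ`; the condition then puts each `γσ` in `T`,
structurality puts `φσ` in `T`, hence `τ(φσ) ⊆ θ(T, τ)`. Completeness is read off the identity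
valuation into `Fm / θ(Cn Γ, τ)`.
-/

namespace Fm

variable {L : Sig}

theorem subst_congr {σ σ' : ℕ → Fm L} : ∀ t : Fm L,
    (∀ n ∈ t.vars, σ n = σ' n) → t.subst σ = t.subst σ'
  | .var n, h => h n rfl
  | .op f as, h => congrArg (Fm.op f) <| funext fun i =>
      subst_congr (as i) fun n hn => h n (Set.mem_iUnion.2 ⟨i, hn⟩)

theorem subst_subst (σ σ' : ℕ → Fm L) : ∀ t : Fm L,
    (t.subst σ).subst σ' = t.subst fun n => (σ n).subst σ'
  | .var _ => rfl
  | .op f as => congrArg (Fm.op f) <| funext fun i => subst_subst σ σ' (as i)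

theorem subst_var : ∀ t : Fm L, t.subst Fm.var = t
  | .var _ => rfl
  | .op f as => congrArg (Fm.op f) <| funext fun i => subst_var (as i)

theorem subst1_zero_subst {ε : Fm L} (hε : ε.vars ⊆ {0}) (γ : Fm L) (σ : ℕ → Fm L) :
    (subst1 0 γ ε).subst σ = subst1 0 (γ.subst σ) ε := by
  rw [subst1, subst_subst]
  refine subst_congr ε fun n hn => ?_
  obtain rfl : n = 0 := hε hn
  simp

end Fm

section

variable {L : Sig}

theorem tauApp_subst {τ : Set (Fm L × Fm L)} (hτ : IsUnivalent τ) (γ : Fm L)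
    (σ : ℕ → Fm L) :
    tauApp τ (γ.subst σ) = Prod.map (Fm.subst σ) (Fm.subst σ) '' tauApp τ γ := by
  rw [tauApp, tauApp, Set.image_image]
  refine Set.image_congr fun e he => ?_
  rw [Prod.map, Fm.subst1_zero_subst (hτ e he).1, Fm.subst1_zero_subst (hτ e he).2]

theorem tauApp_subset_tauAppSet {τ : Set (Fm L × Fm L)} {Γ : Set (Fm L)} {γ : Fm L}
    (hγ : γ ∈ Γ) : tauApp τ γ ⊆ tauAppSet τ Γ :=
  Set.subset_biUnion_of_mem (u := tauApp τ) hγ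

theorem tauAppSet_mono (τ : Set (Fm L × Fm L)) {Γ Δ : Set (Fm L)} (h : Γ ⊆ Δ) :
    tauAppSet τ Γ ⊆ tauAppSet τ Δ :=
  Set.biUnion_subset_biUnion_left h

theorem isCong_eval_kernel (A : Alg L) (v : ℕ → A.carrier) :
    IsCong (FmAlg L) fun s t : Fm L => s.eval A v = t.eval A v :=
  ⟨⟨fun _ => rfl, Eq.symm, Eq.trans⟩,
    fun f _ _ h => congrArg (A.interp f) (funext h)⟩

theorem isCong_congGen (A : Alg L) (X : Set (A.carrier × A.carrier)) :
    IsCong A (congGen A X) :=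
  ⟨⟨fun a _ hθ _ => hθ.1.refl a,
    fun h θ hθ hX => hθ.1.symm (h θ hθ hX),
    fun h₁ h₂ θ hθ hX => hθ.1.trans (h₁ θ hθ hX) (h₂ θ hθ hX)⟩,
   fun f _ _ h θ hθ hX => hθ.2 f _ _ fun i => h i θ hθ hX⟩

theorem congGen_of_mem (A : Alg L) {X : Set (A.carrier × A.carrier)} {p : A.carrier × A.carrier}
    (hp : p ∈ X) : congGen A X p.1 p.2 :=
  fun _ _ hX => hX p hp

theorem eqConseq_of_congGen (K : Set (Alg L)) {Θ : Set (Fm L × Fm L)} {e : Fm L × Fm L}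
    (he : congGen (FmAlg L) Θ e.1 e.2) : eqConseq K Θ e :=
  fun A _ v hΘ => he _ (isCong_eval_kernel A v) hΘ

noncomputable def quotAlg (X : Set (Fm L × Fm L)) : Alg L :=
  ⟨Quot (congGen (FmAlg L) X), fun f as => Quot.mk _ (Fm.op f fun i => (as i).out)⟩

theorem quotAlg_mk_eq_iff {X : Set (Fm L × Fm L)} {s t : Fm L} :
    Quot.mk (congGen (FmAlg L) X) s = Quot.mk _ t ↔ congGen (FmAlg L) X s t :=
  (isCong_congGen (FmAlg L) X).1.quot_mk_eq_iff s t

theorem eval_quotAlg_mk (X : Set (Fm L × Fm L)) (σ : ℕ → Fm L) :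
    ∀ t : Fm L, t.eval (quotAlg X) (fun n => Quot.mk _ (σ n)) = Quot.mk _ (t.subst σ)
  | .var _ => rfl
  | .op f as => Quot.sound <| (isCong_congGen (FmAlg L) X).2 f _ _ fun i =>
      quotAlg_mk_eq_iff.1 <| (Quot.out_eq _).trans (eval_quotAlg_mk X σ (as i))

theorem quotAlg_sat_tauApp_iff {τ : Set (Fm L × Fm L)} (hτ : IsUnivalent τ)
    (X : Set (Fm L × Fm L)) (σ : ℕ → Fm L) (γ : Fm L) :
    (∀ e ∈ tauApp τ γ, e.1.eval (quotAlg X) (fun n => Quot.mk _ (σ n)) =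
        e.2.eval (quotAlg X) (fun n => Quot.mk _ (σ n))) ↔
      ∀ e ∈ tauApp τ (γ.subst σ), congGen (FmAlg L) X e.1 e.2 := by
  simp only [eval_quotAlg_mk, tauApp_subst hτ, Set.forall_mem_image, Prod.map_fst, Prod.map_snd]
  exact forall₂_congr fun _ _ => quotAlg_mk_eq_iff

end

namespace Logic

variable {L : Sig} (ℒ : Logic L)

def IsTheory (T : Set (Fm L)) : Prop :=
  ∀ ψ, ℒ.deriv T ψ → ψ ∈ T

theorem isTheory_setOf_deriv (Γ : Set (Fm L)) : ℒ.IsTheory {ψ | ℒ.deriv Γ ψ} :=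
  fun ψ h => ℒ.cut _ Γ ψ h fun _ hγ => hγ

theorem mem_of_deriv_subst {T : Set (Fm L)} (hT : ℒ.IsTheory T) {Γ : Set (Fm L)} {φ : Fm L}
    (h : ℒ.deriv Γ φ) (σ : ℕ → Fm L) (hΓ : ∀ γ ∈ Γ, γ.subst σ ∈ T) : φ.subst σ ∈ T :=
  hT _ <| ℒ.cut _ _ _ (ℒ.substInv σ Γ φ h) <| by
    rintro _ ⟨γ, hγ, rfl⟩
    exact ℒ.axm _ _ (hΓ γ hγ)

def theoryQuotients (τ : Set (Fm L × Fm L)) : Set (Alg L) :=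
  {A | ∃ T, ℒ.IsTheory T ∧ A = quotAlg (tauAppSet τ T)}

def DerivOfCongGen (τ : Set (Fm L × Fm L)) : Prop :=
  ∀ (Γ : Set (Fm L)) (φ : Fm L),
    (∀ e ∈ tauApp τ φ, congGen (FmAlg L) (tauAppSet τ Γ) e.1 e.2) → ℒ.deriv Γ φ

variable {ℒ} {τ : Set (Fm L × Fm L)}

theorem theoryQuotients_sound (hτ : IsUnivalent τ) (hcond : ℒ.DerivOfCongGen τ)
    {Γ : Set (Fm L)} {φ : Fm L} (h : ℒ.deriv Γ φ) :
    ∀ e ∈ tauApp τ φ, eqConseq (ℒ.theoryQuotients τ) (tauAppSet τ Γ) e := by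
  rintro e he _ ⟨T, hT, rfl⟩ v hΓ
  obtain ⟨σ, rfl⟩ : ∃ σ : ℕ → Fm L, (fun n => Quot.mk _ (σ n)) = v :=
    ⟨fun n => (v n).out, funext fun n => Quot.out_eq (v n)⟩
  have hΓT : ∀ γ ∈ Γ, γ.subst σ ∈ T := fun γ hγ =>
    hT _ <| hcond T _ <| (quotAlg_sat_tauApp_iff hτ _ σ γ).1 fun e he =>
      hΓ e (tauApp_subset_tauAppSet hγ he)
  have hφT : φ.subst σ ∈ T := ℒ.mem_of_deriv_subst hT h σ hΓT
  exact (quotAlg_sat_tauApp_iff hτ _ σ φ).2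
    (fun _ he' => congGen_of_mem _ (tauApp_subset_tauAppSet hφT he')) e he

theorem theoryQuotients_complete (hcond : ℒ.DerivOfCongGen τ) {Γ : Set (Fm L)} {φ : Fm L}
    (h : ∀ e ∈ tauApp τ φ, eqConseq (ℒ.theoryQuotients τ) (tauAppSet τ Γ) e) :
    ℒ.deriv Γ φ := by
  set T := {ψ | ℒ.deriv Γ ψ}
  have heval : ∀ t : Fm L, t.eval (quotAlg (tauAppSet τ T)) (fun n => Quot.mk _ (Fm.var n)) =
      Quot.mk _ t := fun t => by rw [eval_quotAlg_mk, Fm.subst_var]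
  have hΓ : ∀ p ∈ tauAppSet τ Γ, p.1.eval (quotAlg (tauAppSet τ T))
      (fun n => Quot.mk _ (Fm.var n)) = p.2.eval (quotAlg (tauAppSet τ T)) _ := fun p hp =>
    (heval _).trans <| (quotAlg_mk_eq_iff.2 <| congGen_of_mem _ <|
      tauAppSet_mono τ (fun γ => ℒ.axm Γ γ) hp).trans (heval _).symm
  have hTφ : ℒ.deriv T φ := hcond T φ fun e he => quotAlg_mk_eq_iff.1 <|
    (heval e.1).symm.trans <| (h e he _ ⟨T, ℒ.isTheory_setOf_deriv Γ, rfl⟩ _ hΓ).trans (heval e.2)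
  exact ℒ.cut T Γ φ hTφ fun _ hγ => hγ

end Logic

/-- `ℒ` has a `τ`-algebraic semantics iff `Γ ⊢ φ` whenever `τ(φ) ⊆ θ(Γ, τ)`, the
congruence of the formula algebra generated by `{ (ε(γ), δ(γ)) : ε ≈ δ ∈ τ, γ ∈ Γ }`. -/
theorem tau_alg_sem_iff_congruence_condition {L : Sig} (ℒ : Logic L)
    (τ : Set (Fm L × Fm L)) (hτ : IsUnivalent τ) :
    (∃ K : Set (Alg L), IsTauAlgSem ℒ τ K) ↔
      ∀ (Γ : Set (Fm L)) (φ : Fm L),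
        (∀ e ∈ tauApp τ φ, congGen (FmAlg L) (tauAppSet τ Γ) e.1 e.2) →
        ℒ.deriv Γ φ := by
  constructor
  · rintro ⟨K, -, hK⟩ Γ φ hφ
    exact (hK Γ φ).2 fun e he => eqConseq_of_congGen K (hφ e he)
  · intro hcond
    exact ⟨ℒ.theoryQuotients τ, hτ, fun Γ φ =>
      ⟨Logic.theoryQuotients_sound hτ hcond, Logic.theoryQuotients_complete hcond⟩⟩
end

section
/- A logic ⊢ has a unital matrix semantics if and only if for every formula φ(v, z⃗), the rule x, y, φ(x, z⃗) ⊢ φ(y, z⃗) is valid in ⊢. -/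
/-!
For a set `T` of formulas, relating `α` and `β` when `p α ∈ T ↔ p β ∈ T` for every unary
polynomial `p` of the formula algebra yields a congruence compatible with `T` (its Leibniz
congruence). Over the theories `T` of any logic, the quotient matrices `⟨Fm/≡, T/≡⟩` form a
matrix semantics. The rule `x, y, φ(x, z⃗) ⊢ φ(y, z⃗)` says exactly that any two members of a
theory are Leibniz congruent, i.e. that `T/≡` has at most one element. Conversely, in a unital
matrix `x, y ∈ F` forces `x = y`, hence `φ(x, z⃗) = φ(y, z⃗)`.
-/

open Function

namespace Fm

variable {L : Sig}

theorem subst_subst_s9 (ρ τ : ℕ → Fm L) (ψ : Fm L) :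
    (ψ.subst ρ).subst τ = ψ.subst (fun n => (ρ n).subst τ) := by
  induction ψ with
  | var n => rfl
  | op f as ih => exact congrArg _ (funext ih)

theorem subst_var_s9 (ψ : Fm L) : ψ.subst Fm.var = ψ := by
  induction ψ with
  | var n => rfl
  | op f as ih => exact congrArg _ (funext ih)

theorem eval_subst (A : Alg L) (σ : ℕ → Fm L) (w : ℕ → A.carrier) (ψ : Fm L) :
    (ψ.subst σ).eval A w = ψ.eval A (fun n => (σ n).eval A w) := by
  induction ψ with
  | var n => rfl
  | op f as ih => exact congrArg _ (funext ih)

theorem eval_subst1 (A : Alg L) (v : ℕ) (t : Fm L) (w : ℕ → A.carrier) (ψ : Fm L) :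
    (Fm.subst1 v t ψ).eval A w = ψ.eval A (update w v (t.eval A w)) := by
  rw [subst1, eval_subst]
  congr 1
  funext n
  rcases eq_or_ne n v with rfl | hn
  · simp
  · simp [hn, Fm.eval]

theorem eval_fmAlg (σ : ℕ → Fm L) (ψ : Fm L) : ψ.eval (FmAlg L) σ = ψ.subst σ := by
  induction ψ with
  | var n => rfl
  | op f as ih => exact congrArg (Fm.op f) (funext ih)

end Fm

theorem rel_apply_of_forall_rel_update {ι α β : Type*} [Finite ι] [DecidableEq ι]
    {r : α → α → Prop} {s : β → β → Prop} (hs : Equivalence s) {g : (ι → α) → β}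
    (hg : ∀ c i a b, r a b → s (g (update c i a)) (g (update c i b)))
    {as bs : ι → α} (h : ∀ i, r (as i) (bs i)) : s (g as) (g bs) := by
  cases nonempty_fintype ι
  suffices ∀ S : Finset ι, s (g as) (g (S.piecewise bs as)) by
    simpa using this Finset.univ
  intro S
  induction S using Finset.induction_on with
  | empty => simpa using hs.refl _
  | insert j S hj ih =>
    have step := hg (S.piecewise bs as) j (as j) (bs j) (h j)
    rw [← Finset.piecewise_eq_of_notMem S bs as hj, update_eq_self] at step
    rw [Finset.piecewise_insert]
    exact hs.trans ih step

section Algebra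

variable {L : Sig} (A : Alg L)

/-- The parameters `c` are stored in the variables `1, …, n`, and the old parameter variables
are shifted up by `n`. -/
theorem IsUnaryPoly.comp_interp_update {p : A.carrier → A.carrier} (hp : IsUnaryPoly A p)
    (f : L.Op) (c : Fin (L.ar f) → A.carrier) (k : Fin (L.ar f)) :
    IsUnaryPoly A (fun a => p (A.interp f (update c k a))) := by
  obtain ⟨φ, d, hφ⟩ := hp
  refine ⟨φ.subst fun n => if n = 0 then
      Fm.op f (fun i => if i = k then Fm.var 0 else Fm.var (i + 1)) else Fm.var (n + L.ar f),
    fun m => if h : m - 1 < L.ar f then c ⟨m - 1, h⟩ else d (m - L.ar f), fun a => ?_⟩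
  beta_reduce
  rw [hφ, Fm.eval_subst]
  congr 1
  funext n
  rcases eq_or_ne n 0 with rfl | hn
  · simp only [if_true, Fm.eval]
    congr 1
    funext i
    rcases eq_or_ne i k with rfl | hik
    · simp [Fm.eval]
    · simp [hik, Fm.eval]
  · have hshift : ¬ n + L.ar f - 1 < L.ar f := by omega
    simp [hn, Fm.eval, hshift]

/-- The Leibniz congruence of `F`, described by unary polynomials. -/
def polyLeibniz (F : Set A.carrier) (a b : A.carrier) : Prop :=
  ∀ p, IsUnaryPoly A p → (p a ∈ F ↔ p b ∈ F)

variable {A}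

theorem isCong_polyLeibniz (F : Set A.carrier) : IsCong A (polyLeibniz A F) := by
  have hequiv : Equivalence (polyLeibniz A F) :=
    ⟨fun _ _ _ => Iff.rfl, fun h p hp => (h p hp).symm,
      fun h₁ h₂ p hp => (h₁ p hp).trans (h₂ p hp)⟩
  refine ⟨hequiv, fun f as bs h => rel_apply_of_forall_rel_update hequiv ?_ h⟩
  intro c k a b hab p hp
  exact hab _ (hp.comp_interp_update A f c k)

theorem compatible_polyLeibniz (F : Set A.carrier) : Compatible A (polyLeibniz A F) F := by
  intro a b hab
  exact (hab id ⟨Fm.var 0, fun _ => a, fun _ => rfl⟩).mp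

end Algebra

namespace IsCong

variable {L : Sig} {A : Alg L} {θ : A.carrier → A.carrier → Prop}

def setoid (hθ : IsCong A θ) : Setoid A.carrier := ⟨θ, hθ.1⟩

noncomputable def quotient (hθ : IsCong A θ) : Alg L :=
  ⟨Quotient hθ.setoid, fun f as => ⟦A.interp f (fun i => (as i).out)⟧⟩

theorem eval_quotient_mk (hθ : IsCong A θ) (w : ℕ → A.carrier) (φ : Fm L) :
    φ.eval hθ.quotient (fun n => ⟦w n⟧) = (⟦φ.eval A w⟧ : Quotient hθ.setoid) := by
  induction φ with
  | var n => rfl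
  | op f as ih =>
    refine (congrArg (hθ.quotient.interp f) (funext ih)).trans (Quotient.sound ?_)
    exact hθ.2 f _ _ fun i => Quotient.mk_out (s := hθ.setoid) (Fm.eval A w (as i))

end IsCong

section Lindenbaum

variable {L : Sig}

/-- The reduced matrix `⟨Fm/Ω T, T/Ω T⟩` of a set `T` of formulas. -/
noncomputable def lindenbaum (T : Set (Fm L)) : LMatrix L :=
  ⟨(isCong_polyLeibniz (A := FmAlg L) T).quotient,
    Quotient.mk (isCong_polyLeibniz (A := FmAlg L) T).setoid '' T⟩

theorem lindenbaum_eval_mem_iff (T : Set (Fm L)) (σ : ℕ → Fm L) (φ : Fm L) :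
    φ.eval (lindenbaum T).alg (fun n => Quotient.mk _ (σ n)) ∈ (lindenbaum T).F ↔
      φ.subst σ ∈ T := by
  erw [IsCong.eval_quotient_mk, Fm.eval_fmAlg]
  constructor
  · rintro ⟨ψ, hψ, hψφ⟩
    exact compatible_polyLeibniz (A := FmAlg L) T _ _ (Quotient.exact hψφ) hψ
  · exact fun h => ⟨_, h, rfl⟩

theorem lindenbaum_F_subsingleton {T : Set (Fm L)}
    (hT : ∀ α ∈ T, ∀ β ∈ T, polyLeibniz (FmAlg L) T α β) : (lindenbaum T).F.Subsingleton := by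
  rintro _ ⟨α, hα, rfl⟩ _ ⟨β, hβ, rfl⟩
  exact Quotient.sound (hT α hα β hβ)

end Lindenbaum

namespace Logic

variable {L : Sig} (ℒ : Logic L)

def theory (Γ : Set (Fm L)) : Set (Fm L) := {φ | ℒ.deriv Γ φ}

theorem isMatrixSemantics_lindenbaum :
    IsMatrixSemantics ℒ (Set.range fun Γ => lindenbaum (ℒ.theory Γ)) := by
  intro Γ φ
  constructor
  · rintro hΓφ _ ⟨Δ, rfl⟩ w hw
    obtain ⟨σ, rfl⟩ : ∃ σ : ℕ → Fm L, w = fun n => Quotient.mk _ (σ n) :=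
      ⟨_, funext fun n => (Quotient.out_eq (w n)).symm⟩
    refine (lindenbaum_eval_mem_iff _ σ φ).mpr (ℒ.cut _ Δ _ (ℒ.substInv σ Γ φ hΓφ) ?_)
    rintro _ ⟨γ, hγ, rfl⟩
    exact (lindenbaum_eval_mem_iff _ σ γ).mp (hw γ hγ)
  · intro hφ
    have := hφ _ ⟨Γ, rfl⟩ (fun n => Quotient.mk _ (Fm.var n)) fun γ hγ => by
      rw [lindenbaum_eval_mem_iff, Fm.subst_var_s9]
      exact ℒ.axm Γ γ hγ
    rwa [lindenbaum_eval_mem_iff, Fm.subst_var_s9] at this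

/-- The rule for `ψ` with its variables shifted past `0` and `1`, instantiated by `0 ↦ α`,
`1 ↦ β`. -/
theorem deriv_subst_of_rule
    (hrule : ∀ (φ : Fm L) (v : ℕ),
      ℒ.deriv {Fm.var 0, Fm.var 1, Fm.subst1 v (Fm.var 0) φ} (Fm.subst1 v (Fm.var 1) φ))
    {Γ : Set (Fm L)} {α β : Fm L} (hα : ℒ.deriv Γ α) (hβ : ℒ.deriv Γ β) (ψ : Fm L)
    (σ : ℕ → Fm L) (h : ℒ.deriv Γ (ψ.subst fun n => if n = 0 then α else σ n)) :
    ℒ.deriv Γ (ψ.subst fun n => if n = 0 then β else σ n) := by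
  set τ : ℕ → Fm L := fun m => if m = 0 then α else if m = 1 then β else σ (m - 2)
  have hinst : ∀ t : Fm L, (Fm.subst1 2 t (ψ.subst fun n => Fm.var (n + 2))).subst τ =
      ψ.subst fun n => if n = 0 then t.subst τ else σ n := by
    intro t
    rw [Fm.subst1, Fm.subst_subst_s9, Fm.subst_subst_s9]
    congr 1
    funext n
    rcases eq_or_ne n 0 with rfl | hn
    · simp [Fm.subst]
    · have h2 : n + 2 - 2 = n := by omega
      simp [hn, Fm.subst, τ, h2]
  have hrule' := ℒ.substInv τ _ _ (hrule (ψ.subst fun n => Fm.var (n + 2)) 2)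
  rw [hinst] at hrule'
  refine ℒ.cut _ Γ _ hrule' ?_
  rintro _ ⟨δ, hδ, rfl⟩
  rcases hδ with rfl | rfl | rfl
  · exact hα
  · exact hβ
  · rw [hinst]
    exact h

theorem polyLeibniz_theory_of_rule
    (hrule : ∀ (φ : Fm L) (v : ℕ),
      ℒ.deriv {Fm.var 0, Fm.var 1, Fm.subst1 v (Fm.var 0) φ} (Fm.subst1 v (Fm.var 1) φ))
    (Γ : Set (Fm L)) :
    ∀ α ∈ ℒ.theory Γ, ∀ β ∈ ℒ.theory Γ, polyLeibniz (FmAlg L) (ℒ.theory Γ) α β := by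
  rintro α hα β hβ p ⟨φ, c, hp⟩
  erw [hp, hp, Fm.eval_fmAlg, Fm.eval_fmAlg]
  exact ⟨ℒ.deriv_subst_of_rule hrule hα hβ φ c, ℒ.deriv_subst_of_rule hrule hβ hα φ c⟩

end Logic

theorem inducedBy_rule_of_subsingleton {L : Sig} {M : Set (LMatrix L)}
    (hM : ∀ m ∈ M, m.F.Subsingleton) (φ : Fm L) (v : ℕ) :
    inducedBy M {Fm.var 0, Fm.var 1, Fm.subst1 v (Fm.var 0) φ} (Fm.subst1 v (Fm.var 1) φ) := by
  intro m hm w hw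
  have h01 : w 0 = w 1 := hM m hm (hw (Fm.var 0) (by simp)) (hw (Fm.var 1) (by simp))
  have hφ := hw (Fm.subst1 v (Fm.var 0) φ) (by simp)
  rw [Fm.eval_subst1] at hφ ⊢
  simpa [Fm.eval, h01] using hφ

/-- A logic has a unital matrix semantics iff the rules `x, y, φ(x, z⃗) ⊢ φ(y, z⃗)` are
valid in it, for every formula `φ(v, z⃗)`. -/
theorem unital_matrix_semantics_iff {L : Sig} (ℒ : Logic L) :
    (∃ M : Set (LMatrix L), (∀ m ∈ M, m.F.Subsingleton) ∧ IsMatrixSemantics ℒ M) ↔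
      ∀ (φ : Fm L) (v : ℕ),
        ℒ.deriv {Fm.var 0, Fm.var 1, Fm.subst1 v (Fm.var 0) φ}
          (Fm.subst1 v (Fm.var 1) φ) := by
  constructor
  · rintro ⟨M, hM, hsem⟩ φ v
    exact (hsem _ _).mpr (inducedBy_rule_of_subsingleton hM φ v)
  · intro hrule
    refine ⟨_, ?_, ℒ.isMatrixSemantics_lindenbaum⟩
    rintro _ ⟨Γ, rfl⟩
    exact lindenbaum_F_subsingleton (ℒ.polyLeibniz_theory_of_rule hrule Γ)
end
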